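/- arXiv:2012.09475 — 5 statements merged into one kernel-verified Lean document; each statement's English description precedes it below -/
import Mathlib

section
/- Every co-TT graph arises from the interval dependency relation: given functions a, b : V → ℝ, setting δ = max over v of max(a(v) - b(v), 0), ℓ_v = a(v), and r_v = b(v) + δ yields valid intervals (ℓ_v ≤ r_v) such that u and v are adjacent in the co-TT graph iff the intervals [ℓ_u, r_u] and [ℓ_v, r_v] are dependent with threshold δ. -/
/- Raising every right endpoint by the same δ turns `r u - ℓ v > δ` back into `a v < b u`,
for any δ; choosing δ ≥ max (a v - b v) only serves to make every `[a v, b v + δ]` an interval. -/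

theorem lt_add_sub_iff_lt {a b δ : ℝ} : δ < b + δ - a ↔ a < b := by
  constructor <;> intro h <;> linarith

theorem stmt_4 {V : Type*} [Fintype V] [Nonempty V] (a b : V → ℝ) :
    let δ := Finset.univ.sup' Finset.univ_nonempty (fun v => max (a v - b v) 0)
    let ℓ := fun v => a v
    let r := fun v => b v + δ
    (∀ v : V, ℓ v ≤ r v) ∧
    (∀ u v : V, (a u < b v ∧ a v < b u) ↔ (r u - ℓ v > δ ∧ r v - ℓ u > δ)) := by
  intro δ ℓ r
  have sub_le_δ (v : V) : a v - b v ≤ δ :=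
    (le_max_left _ _).trans (Finset.le_sup' (fun v => max (a v - b v) 0) (Finset.mem_univ v))
  refine ⟨fun v => by linarith [sub_le_δ v], fun u v => ?_⟩
  simp only [ℓ, r, gt_iff_lt, lt_add_sub_iff_lt, and_comm]
end

section
/- A trivial interval is simplicial in the dependency graph: if I_k has width at most δ and is dependent on both I_i and I_j, then I_i and I_j are dependent on each other. -/
theorem sub_gt_of_width_le {δ a b ℓ r : ℝ} (hwidth : r - ℓ ≤ δ) (ha : a - ℓ > δ)
    (hb : r - b > δ) : a - b > δ := by
  have hsplit : a - b = (a - ℓ) + (r - b) - (r - ℓ) := by ring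
  linarith

theorem stmt_7_general (δ ℓi ri ℓj rj ℓk rk : ℝ)
    (htriv : rk - ℓk ≤ δ)
    (hki : rk - ℓi > δ ∧ ri - ℓk > δ)
    (hkj : rk - ℓj > δ ∧ rj - ℓk > δ) :
    ri - ℓj > δ ∧ rj - ℓi > δ :=
  ⟨sub_gt_of_width_le htriv hki.2 hkj.1, sub_gt_of_width_le htriv hkj.2 hki.1⟩

theorem stmt_7 (δ ℓi ri ℓj rj ℓk rk : ℝ) (hδ : 0 ≤ δ)
    (htriv : rk - ℓk ≤ δ)
    (hki : rk - ℓi > δ ∧ ri - ℓk > δ)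
    (hkj : rk - ℓj > δ ∧ rj - ℓk > δ) :
    ri - ℓj > δ ∧ rj - ℓi > δ :=
  stmt_7_general δ ℓi ri ℓj rj ℓk rk htriv hki hkj
end

section
/- For all reals w_b > 0 and W ≥ 0 with W < 2·w_b, letting p = W/(2·w_b), we have p·w_b + (1 - p)·(W + (3/2)·w_b) ≤ (57/32)·w_b. -/
theorem stmt_11_general (wb W : ℝ) (hb : 0 < wb) :
    (W / (2 * wb)) * wb + (1 - W / (2 * wb)) * (W + (3 / 2) * wb) ≤ (57 / 32) * wb := by
  have gap : (57 / 32) * wb - ((W / (2 * wb)) * wb + (1 - W / (2 * wb)) * (W + (3 / 2) * wb))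
      = (3 * wb - 4 * W) ^ 2 / (32 * wb) := by
    field_simp
    ring
  have : 0 ≤ (3 * wb - 4 * W) ^ 2 / (32 * wb) := by positivity
  linarith

theorem stmt_11 (wb W : ℝ) (hb : 0 < wb) (hW : 0 ≤ W) (h : W < 2 * wb) :
    (W / (2 * wb)) * wb + (1 - W / (2 * wb)) * (W + (3 / 2) * wb) ≤ (57 / 32) * wb :=
  stmt_11_general wb W hb
end

section
/- For all reals w_b > 0 and W ≥ 0 with W < √3·w_b, letting p = W/(√3·w_b), we have p·w_b + (1 - p)·(W + (1 + 1/√3)·w_b) ≤ (1 + 4/(3·√3))·w_b. -/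
theorem cost_share_gap_eq (wb W : ℝ) (hb : wb ≠ 0) :
    (1 + 4 / (3 * Real.sqrt 3)) * wb
        - ((W / (Real.sqrt 3 * wb)) * wb
          + (1 - W / (Real.sqrt 3 * wb)) * (W + (1 + 1 / Real.sqrt 3) * wb))
      = (Real.sqrt 3 * W - wb) ^ 2 / (3 * (Real.sqrt 3 * wb)) := by
  have hsq : Real.sqrt 3 ^ 2 = 3 := Real.sq_sqrt (by norm_num)
  have hs : Real.sqrt 3 ≠ 0 := by positivity
  field_simp
  linear_combination (-Real.sqrt 3 * W ^ 2 - wb * W) * hsq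

theorem stmt_12_general (wb W : ℝ) (hb : 0 < wb) :
    (W / (Real.sqrt 3 * wb)) * wb
      + (1 - W / (Real.sqrt 3 * wb)) * (W + (1 + 1 / Real.sqrt 3) * wb)
      ≤ (1 + 4 / (3 * Real.sqrt 3)) * wb := by
  rw [← sub_nonneg, cost_share_gap_eq wb W hb.ne']
  positivity

theorem stmt_12 (wb W : ℝ) (hb : 0 < wb) (hW : 0 ≤ W) (h : W < Real.sqrt 3 * wb) :
    (W / (Real.sqrt 3 * wb)) * wb
      + (1 - W / (Real.sqrt 3 * wb)) * (W + (1 + 1 / Real.sqrt 3) * wb)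
      ≤ (1 + 4 / (3 * Real.sqrt 3)) * wb :=
  stmt_12_general wb W hb
end

section
/- Define γ(α) = α²(2-α)²/(4(α-1)) + α for 1 < α < 2. Then γ attains its minimum on (1,2) at α = 1 + 1/√3, and the minimum value is 1 + 4/(3·√3). -/
/-!
Substitute `α = 1 + t`. If `u² = 1/3`, then `γ(1 + u) = 1 + 4u/3`, and
`4t · (γ(1 + t) - γ(1 + u)) = (t - u)² ((t + u)² + 3 - u²)`,
which is nonnegative for `t > 0` and vanishes at `t = u`; take `u = 1/√3`.
-/

noncomputable section

namespace CompetitiveRatio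

def gamma (α : ℝ) : ℝ := α ^ 2 * (2 - α) ^ 2 / (4 * (α - 1)) + α

variable {t u : ℝ}

lemma gamma_one_add (t : ℝ) : gamma (1 + t) = (1 - t ^ 2) ^ 2 / (4 * t) + 1 + t := by
  unfold gamma
  ring

lemma gamma_one_add_of_sq_eq (hu : u ^ 2 = 1 / 3) : gamma (1 + u) = 1 + 4 * u / 3 := by
  have hu0 : u ≠ 0 := by rintro rfl; norm_num at hu
  rw [gamma_one_add]
  field_simp
  linear_combination (3 * u ^ 2 - 9) * hu

lemma gamma_one_add_sub_of_sq_eq (ht : t ≠ 0) (hu : u ^ 2 = 1 / 3) :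
    gamma (1 + t) - gamma (1 + u) = (t - u) ^ 2 * ((t + u) ^ 2 + 3 - u ^ 2) / (4 * t) := by
  rw [gamma_one_add_of_sq_eq hu, gamma_one_add]
  field_simp
  linear_combination (9 * t ^ 2 - 6 * t * u - 9) * hu

lemma gamma_one_add_le (ht : 0 < t) (hu : u ^ 2 = 1 / 3) : gamma (1 + u) ≤ gamma (1 + t) := by
  have hsub := gamma_one_add_sub_of_sq_eq ht.ne' hu
  have hpos : 0 ≤ (t - u) ^ 2 * ((t + u) ^ 2 + 3 - u ^ 2) / (4 * t) := by
    have : 0 < (t + u) ^ 2 + 3 - u ^ 2 := by rw [hu]; nlinarith [sq_nonneg (t + u)]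
    positivity
  linarith

end CompetitiveRatio

end

open CompetitiveRatio in
theorem stmt_14 :
    let γ : ℝ → ℝ := fun α => α ^ 2 * (2 - α) ^ 2 / (4 * (α - 1)) + α
    (1 : ℝ) < 1 + 1 / Real.sqrt 3 ∧ 1 + 1 / Real.sqrt 3 < 2 ∧
    (∀ α : ℝ, 1 < α → α < 2 → γ (1 + 1 / Real.sqrt 3) ≤ γ α) ∧
    γ (1 + 1 / Real.sqrt 3) = 1 + 4 / (3 * Real.sqrt 3) := by
  intro γ
  change 1 < 1 + 1 / √3 ∧ 1 + 1 / √3 < 2 ∧ (∀ α : ℝ, 1 < α → α < 2 → gamma (1 + 1 / √3) ≤ gamma α)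
    ∧ gamma (1 + 1 / √3) = 1 + 4 / (3 * √3)
  have h_sq : (1 / √3) ^ 2 = 1 / 3 := by rw [div_pow, Real.sq_sqrt (by norm_num)]; norm_num
  have h_pos : 0 < 1 / √3 := by positivity
  have h_lt_one : 1 / √3 < 1 := by
    rw [div_lt_one (by positivity), Real.lt_sqrt zero_le_one]
    norm_num
  refine ⟨by linarith, by linarith, fun α h1 _ => ?_, ?_⟩
  · simpa using gamma_one_add_le (sub_pos.2 h1) h_sq
  · rw [gamma_one_add_of_sq_eq h_sq]
    ring
end
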